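/- Let 0 < s < 1, let N > 2s be an integer, let ν ∈ ℝ^N be a unit vector and λ ∈ ℝ, and write Σ = {x ∈ ℝ^N : x·ν < λ} and x_λ^ν = x + 2(λ - x·ν)ν for the reflection across the hyperplane {x·ν = λ}. Let u, v : ℝ^N → ℝ be measurable functions such that u - v is odd with respect to the hyperplane, i.e. (u-v)(x_λ^ν) = -(u-v)(x) for a.e. x ∈ ℝ^N. Define w(x) = max{u(x)-v(x),0} for x ∈ Σ and w(x) = 0 for x ∈ ℝ^N∖Σ, and assume that both double integrals below are finite. Then ∫_{ℝ^N}∫_{ℝ^N} ((u(x)-v(x)) - (u(y)-v(y)))(w(x)-w(y)) / |x-y|^{N+2s} dx dy ≥ ∫_{ℝ^N}∫_{ℝ^N} (w(x)-w(y))² / |x-y|^{N+2s} dx dy. -/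

import Mathlib

open MeasureTheory Set Bornology

noncomputable section

abbrev Euc (N : ℕ) := EuclideanSpace ℝ (Fin N)

/-- The normalizing constant `c_{N,s}` of the fractional Laplacian. -/
noncomputable def cNs (N : ℕ) [NeZero N] (s : ℝ) : ℝ :=
  (∫ ξ : Euc N, (1 - Real.cos (ξ 0)) / ‖ξ‖ ^ ((N : ℝ) + 2 * s))⁻¹

/-- The fractional bilinear (Gagliardo) form. -/
noncomputable def fracForm (N : ℕ) (s : ℝ) (u v : Euc N → ℝ) : ℝ :=
  ∫ p : Euc N × Euc N, (u p.1 - u p.2) * (v p.1 - v p.2) / ‖p.1 - p.2‖ ^ ((N : ℝ) + 2 * s)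

/-- Membership in `H^s(ℝ^N)`. -/
def MemHs (N : ℕ) (s : ℝ) (u : Euc N → ℝ) : Prop :=
  MemLp u 2 (volume : Measure (Euc N)) ∧
    Integrable (fun p : Euc N × Euc N =>
      (u p.1 - u p.2) ^ 2 / ‖p.1 - p.2‖ ^ ((N : ℝ) + 2 * s))

/-- Membership in `H^s_0(Ω)`. -/
def MemHs0 (N : ℕ) (s : ℝ) (Ω : Set (Euc N)) (u : Euc N → ℝ) : Prop :=
  MemHs N s u ∧ ∀ᵐ x : Euc N, x ∉ Ω → u x = 0

/-- Weak solution of `(-Δ)^s u = h(x,u)` in `Ω`, `u = 0` outside `Ω`. -/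
def IsWeakSol (N : ℕ) [NeZero N] (s : ℝ) (Ω : Set (Euc N))
    (h : Euc N → ℝ → ℝ) (u : Euc N → ℝ) : Prop :=
  MemHs0 N s Ω u ∧ IntegrableOn (fun x => h x (u x)) Ω ∧
    ∀ φ : Euc N → ℝ, MemHs0 N s Ω φ → (∃ C, ∀ x, |φ x| ≤ C) →
      cNs N s / 2 * fracForm N s u φ = ∫ x in Ω, h x (u x) * φ x

/-- Hypothesis (H1) for `f` alone: Carathéodory and locally Lipschitz in `t`. -/
def HypH1f (N : ℕ) (Ω : Set (Euc N)) (f : Euc N → ℝ → ℝ) : Prop :=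
  (∀ t : ℝ, Measurable fun x => f x t) ∧
  (∀ M > 0, ∃ L ≥ 0, ∀ x ∈ Ω, ∀ t₁ ∈ Icc (0:ℝ) M, ∀ t₂ ∈ Icc (0:ℝ) M,
      |f x t₁ - f x t₂| ≤ L * |t₁ - t₂|)

/-- Hypothesis (H1). -/
def HypH1 (N : ℕ) (Ω : Set (Euc N)) (f : Euc N → ℝ → ℝ) (g : ℝ → ℝ) : Prop :=
  HypH1f N Ω f ∧
  (∀ M > 0, ∃ L ≥ 0, ∀ t₁ ∈ Icc (0:ℝ) M, ∀ t₂ ∈ Icc (0:ℝ) M,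
      |g t₁ - g t₂| ≤ L * |t₁ - t₂|)

/-- Hypothesis (H2): local Hölder continuity in `x` away from the origin. -/
def HypH2 (N : ℕ) (Ω : Set (Euc N)) (f : Euc N → ℝ → ℝ) : Prop :=
  ∀ M > 0, ∀ r > 0, ∃ γ ∈ Ioo (0:ℝ) 1, ∃ C > 0,
    ∀ x₁ ∈ Ω \ Metric.ball 0 r, ∀ x₂ ∈ Ω \ Metric.ball 0 r, ∀ t ∈ Icc (0:ℝ) M,
      |f x₁ t - f x₂ t| ≤ C * ‖x₁ - x₂‖ ^ γ

/-- Reflection across the hyperplane `{x : x·ν = λ}`. -/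
noncomputable def reflHyp (N : ℕ) (ν : Euc N) (lam : ℝ) (x : Euc N) : Euc N :=
  x + (2 * (lam - (inner ℝ x ν : ℝ))) • ν

/-- Half space `Σ_λ^ν`. -/
def halfSp (N : ℕ) (ν : Euc N) (lam : ℝ) : Set (Euc N) :=
  {x | (inner ℝ x ν : ℝ) < lam}

/-- Convexity of `Ω` in the direction `ν`. -/
def ConvexDir (N : ℕ) (ν : Euc N) (Ω : Set (Euc N)) : Prop :=
  ∀ x ∈ Ω, ∀ t : ℝ, x + t • ν ∈ Ω → ∀ r : ℝ, 0 ≤ r → r ≤ t → x + r • ν ∈ Ω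

/-- The first coordinate direction. -/
noncomputable def e1 (N : ℕ) [NeZero N] : Euc N := EuclideanSpace.single 0 1

/-- Reflection `(x₁,x') ↦ (2λ - x₁, x')`. -/
noncomputable def reflX1 (N : ℕ) [NeZero N] (lam : ℝ) (x : Euc N) : Euc N :=
  WithLp.toLp 2 (fun i => if i = 0 then 2 * lam - x 0 else x i)

/-- `a(ν) = inf_{x ∈ Ω} x·ν`. -/
noncomputable def aDir (N : ℕ) (ν : Euc N) (Ω : Set (Euc N)) : ℝ :=
  sInf ((fun x => (inner ℝ x ν : ℝ)) '' Ω)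

/-- `λ₁(ν)`. -/
noncomputable def lam1 (N : ℕ) (ν : Euc N) (Ω : Set (Euc N)) : ℝ :=
  sSup {lam | aDir N ν Ω < lam ∧ (reflHyp N ν lam) '' (Ω ∩ halfSp N ν lam) ⊆ Ω}

/-- `λ₁⁰(ν) = min {0, λ₁(ν)}`. -/
noncomputable def lam10 (N : ℕ) (ν : Euc N) (Ω : Set (Euc N)) : ℝ :=
  min 0 (lam1 N ν Ω)

/-- Sup norm on a set. -/
noncomputable def supNormOn (N : ℕ) (K : Set (Euc N)) (v : Euc N → ℝ) : ℝ :=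
  sSup ((fun x => |v x|) '' K)

/-- Hölder norm of order `β` (with `⌊β⌋` derivatives) on a set `K`. -/
noncomputable def holderNormOn (N : ℕ) (β : ℝ) (K : Set (Euc N)) (v : Euc N → ℝ) : ℝ :=
  (∑ j ∈ Finset.range (⌊β⌋₊ + 1),
      sSup ((fun x => ‖iteratedFDerivWithin ℝ j v K x‖) '' K)) +
    sSup {c : ℝ | ∃ x ∈ K, ∃ y ∈ K, x ≠ y ∧
      c = ‖iteratedFDerivWithin ℝ ⌊β⌋₊ v K x - iteratedFDerivWithin ℝ ⌊β⌋₊ v K y‖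
            / ‖x - y‖ ^ (β - (⌊β⌋₊ : ℝ))}

/-- The tail norm `‖u‖_{L^s(ℝ^N)}`. -/
noncomputable def tailNorm (N : ℕ) (s : ℝ) (v : Euc N → ℝ) : ℝ :=
  ∫ x : Euc N, |v x| / (1 + ‖x‖ ^ ((N : ℝ) + 2 * s))

/-!
Write `φ = u - v`, `κ = N + 2s`, and let `D(x, y)` be the integrand of the difference of the two
sides. The reflection `R` is a measure-preserving isometric involution, so reflecting either
variable leaves `∫ D` unchanged, and it suffices that `D` summed over the four pairs
`(x, y), (Rx, y), (x, Ry), (Rx, Ry)` is nonnegative off the hyperplane. By this symmetry one may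
take `x, y ∈ Σ`; there `w = φ⁺`, `w ∘ R = 0` and `φ ∘ R = -φ`, and the sum is
`n / |x - y|^κ + (2 φ(x)⁺ φ(y)⁺ - n) / |x - Ry|^κ` with `n = (a - b)(a⁺ - b⁺) - (a⁺ - b⁺)² ≥ 0`
for `a = φ x`, `b = φ y`. It is nonnegative because `|x - y| ≤ |x - Ry|` for `x, y ∈ Σ`.
-/

section NullHyperplane

variable {E : Type*} [NormedAddCommGroup E] [InnerProductSpace ℝ E] [FiniteDimensional ℝ E]
  [MeasurableSpace E] [BorelSpace E]

lemma ae_inner_ne (μ : Measure E) [μ.IsAddHaarMeasure] {ν : E} (hν : ν ≠ 0) (c : ℝ) :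
    ∀ᵐ x ∂μ, (inner ℝ x ν : ℝ) ≠ c := by
  set x₀ : E := (c / ‖ν‖ ^ 2) • ν
  have hx₀ : (inner ℝ x₀ ν : ℝ) = c := by
    rw [real_inner_smul_left, real_inner_self_eq_norm_sq, div_mul_cancel₀]
    exact pow_ne_zero 2 (norm_ne_zero_iff.2 hν)
  have hlevel : {x : E | ¬ (inner ℝ x ν : ℝ) ≠ c} = (· + -x₀) ⁻¹' ((ℝ ∙ ν)ᗮ : Set E) := by
    ext x
    simp only [ne_eq, not_not, mem_ofPred_eq, mem_preimage, ← sub_eq_add_neg, SetLike.mem_coe,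
      Submodule.mem_orthogonal_singleton_iff_inner_left, inner_sub_left, hx₀, sub_eq_zero]
  have hK : (ℝ ∙ ν)ᗮ ≠ ⊤ := by
    rwa [Ne, Submodule.orthogonal_eq_top_iff, Submodule.span_singleton_eq_bot]
  rw [ae_iff, hlevel, measure_preimage_add_right]
  exact Measure.addHaar_submodule μ _ hK

end NullHyperplane

lemma sq_sub_max_zero_le_mul (a b : ℝ) :
    (max a 0 - max b 0) ^ 2 ≤ (a - b) * (max a 0 - max b 0) := by
  rcases le_total a 0 with ha | ha <;> rcases le_total b 0 with hb | hb <;>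
    simp only [max_eq_left, max_eq_right, ha, hb] <;> nlinarith

def gagliardoDefect {E : Type*} [NormedAddCommGroup E] (κ : ℝ) (φ w : E → ℝ) (x y : E) : ℝ :=
  ((φ x - φ y) * (w x - w y) - (w x - w y) ^ 2) / ‖x - y‖ ^ κ

lemma integral_nonneg_of_integral_add_comp_nonneg {α : Type*} [MeasurableSpace α] {μ : Measure α}
    {τ : α → α} (hτ : MeasurePreserving τ μ μ) (hτe : MeasurableEmbedding τ) {F : α → ℝ}
    (hF : Integrable F μ) (h : 0 ≤ ∫ x, (F x + F (τ x)) ∂μ) : 0 ≤ ∫ x, F x ∂μ := by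
  have hFτ : Integrable (fun x => F (τ x)) μ := (hτ.integrable_comp_emb hτe).2 hF
  rw [integral_add hF hFτ, hτ.integral_comp hτe] at h
  linarith

section Reflection

variable {N : ℕ} {ν : Euc N} {lam : ℝ}

lemma inner_reflHyp (hν : ‖ν‖ = 1) (x : Euc N) :
    (inner ℝ (reflHyp N ν lam x) ν : ℝ) = 2 * lam - inner ℝ x ν := by
  rw [reflHyp, inner_add_left, real_inner_smul_left, real_inner_self_eq_norm_sq, hν]
  ring

lemma reflHyp_eq_reflection_add (hν : ‖ν‖ = 1) :
    reflHyp N ν lam = fun x => (ℝ ∙ ν)ᗮ.reflection x + (2 * lam) • ν := by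
  funext x
  rw [Submodule.reflection_orthogonal_apply, Submodule.reflection_singleton_apply, hν, reflHyp,
    real_inner_comm ν x]
  module

lemma reflHyp_reflHyp (hν : ‖ν‖ = 1) (x : Euc N) : reflHyp N ν lam (reflHyp N ν lam x) = x := by
  simp [reflHyp_eq_reflection_add hν, Submodule.reflection_orthogonalComplement_singleton_eq_neg]

lemma norm_reflHyp_sub_reflHyp (hν : ‖ν‖ = 1) (x y : Euc N) :
    ‖reflHyp N ν lam x - reflHyp N ν lam y‖ = ‖x - y‖ := by
  simp [reflHyp_eq_reflection_add hν, ← map_sub]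

lemma norm_reflHyp_sub (hν : ‖ν‖ = 1) (x y : Euc N) :
    ‖reflHyp N ν lam x - y‖ = ‖x - reflHyp N ν lam y‖ := by
  conv_lhs => rw [← reflHyp_reflHyp (lam := lam) hν y]
  exact norm_reflHyp_sub_reflHyp hν x _

lemma norm_sub_le_norm_sub_reflHyp (hν : ‖ν‖ = 1) {x y : Euc N}
    (hx : (inner ℝ x ν : ℝ) < lam) (hy : (inner ℝ y ν : ℝ) < lam) :
    ‖x - y‖ ≤ ‖x - reflHyp N ν lam y‖ := by
  have hsq : ‖x - reflHyp N ν lam y‖ ^ 2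
      = ‖x - y‖ ^ 2 + 4 * (lam - inner ℝ y ν) * (lam - inner ℝ x ν) := by
    rw [reflHyp, ← sub_sub, norm_sub_sq_real, real_inner_smul_right, norm_smul, hν,
      inner_sub_left, Real.norm_eq_abs, mul_one, sq_abs]
    ring
  rw [← sq_le_sq₀ (norm_nonneg _) (norm_nonneg _), hsq]
  nlinarith

lemma measurePreserving_reflHyp (hν : ‖ν‖ = 1) :
    MeasurePreserving (reflHyp N ν lam) := by
  rw [reflHyp_eq_reflection_add hν]
  exact (measurePreserving_add_right volume _).comp (LinearIsometryEquiv.measurePreserving _)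

lemma measurableEmbedding_reflHyp (hν : ‖ν‖ = 1) :
    MeasurableEmbedding (reflHyp N ν lam) := by
  rw [reflHyp_eq_reflection_add hν]
  exact (Homeomorph.addRight _).measurableEmbedding.comp
    (ℝ ∙ ν)ᗮ.reflection.toHomeomorph.measurableEmbedding

lemma gagliardoDefect_reflSum_nonneg_of_mem (hν : ‖ν‖ = 1) {κ : ℝ} (hκ : 0 ≤ κ) {φ w : Euc N → ℝ}
    (hw : ∀ x, w x = if (inner ℝ x ν : ℝ) < lam then max (φ x) 0 else 0) {x y : Euc N}
    (hxo : φ (reflHyp N ν lam x) = -φ x) (hyo : φ (reflHyp N ν lam y) = -φ y)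
    (hx : (inner ℝ x ν : ℝ) < lam) (hy : (inner ℝ y ν : ℝ) < lam) :
    0 ≤ gagliardoDefect κ φ w x y + gagliardoDefect κ φ w (reflHyp N ν lam x) y
      + (gagliardoDefect κ φ w x (reflHyp N ν lam y)
        + gagliardoDefect κ φ w (reflHyp N ν lam x) (reflHyp N ν lam y)) := by
  have hw_refl : ∀ z, (inner ℝ z ν : ℝ) < lam → w (reflHyp N ν lam z) = 0 := fun z hz => by
    rw [hw, if_neg (by rw [inner_reflHyp hν]; linarith)]
  simp only [gagliardoDefect, hw_refl x hx, hw_refl y hy, hw x, hw y, if_pos hx, if_pos hy,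
    hxo, hyo, norm_reflHyp_sub_reflHyp hν, norm_reflHyp_sub hν]
  set a := φ x
  set b := φ y
  set p := max a 0
  set q := max b 0
  set n := (a - b) * (p - q) - (p - q) ^ 2
  set d₁ := ‖x - y‖ ^ κ
  set d₂ := ‖x - reflHyp N ν lam y‖ ^ κ
  have hn : 0 ≤ n := sub_nonneg.2 (sq_sub_max_zero_le_mul a b)
  have hmono : n / d₂ ≤ n / d₁ := by
    rcases (by positivity : 0 ≤ d₁).eq_or_lt with h0 | hpos
    · rw [eq_comm, Real.rpow_eq_zero_iff_of_nonneg (norm_nonneg _), norm_sub_eq_zero_iff] at h0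
      simp [n, p, q, a, b, h0.1]
    · exact div_le_div_of_nonneg_left hn hpos
        (Real.rpow_le_rpow (norm_nonneg _) (norm_sub_le_norm_sub_reflHyp hν hx hy) hκ)
  have hp : p * (p - a) = 0 := by rcases le_total a 0 with h | h <;> simp [p, h]
  have hq : q * (q - b) = 0 := by rcases le_total b 0 with h | h <;> simp [q, h]
  have hcross : ((-a - b) * (0 - q) - (0 - q) ^ 2) + ((a - -b) * (p - 0) - (p - 0) ^ 2)
      = 2 * p * q - n := by
    linear_combination (-2 : ℝ) * hp + (-2 : ℝ) * hq
  have hpq : 0 ≤ 2 * p * q / d₂ := by positivity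
  calc 0 ≤ n / d₁ - n / d₂ + 2 * p * q / d₂ := by linarith
    _ = _ := by rw [show 2 * p * q / d₂ = (2 * p * q - n) / d₂ + n / d₂ by ring, ← hcross]; ring

lemma gagliardoDefect_reflSum_nonneg (hν : ‖ν‖ = 1) {κ : ℝ} (hκ : 0 ≤ κ) {φ w : Euc N → ℝ}
    (hw : ∀ x, w x = if (inner ℝ x ν : ℝ) < lam then max (φ x) 0 else 0) {x y : Euc N}
    (hxo : φ (reflHyp N ν lam x) = -φ x) (hyo : φ (reflHyp N ν lam y) = -φ y)
    (hx : (inner ℝ x ν : ℝ) ≠ lam) (hy : (inner ℝ y ν : ℝ) ≠ lam) :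
    0 ≤ gagliardoDefect κ φ w x y + gagliardoDefect κ φ w (reflHyp N ν lam x) y
      + (gagliardoDefect κ φ w x (reflHyp N ν lam y)
        + gagliardoDefect κ φ w (reflHyp N ν lam x) (reflHyp N ν lam y)) := by
  have hRR := reflHyp_reflHyp (lam := lam) hν
  have hodd_refl : ∀ z, φ (reflHyp N ν lam z) = -φ z → φ (reflHyp N ν lam (reflHyp N ν lam z))
      = -φ (reflHyp N ν lam z) := fun z hz => by rw [hRR, hz, neg_neg]
  have hside : ∀ z, (inner ℝ z ν : ℝ) ≠ lam → ¬ (inner ℝ z ν : ℝ) < lam →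
      (inner ℝ (reflHyp N ν lam z) ν : ℝ) < lam := fun z hz hz' => by
    rw [inner_reflHyp hν]; push Not at hz'; linarith [lt_of_le_of_ne hz' hz.symm]
  wlog hxs : (inner ℝ x ν : ℝ) < lam generalizing x
  · have := this (hodd_refl x hxo) (by rw [inner_reflHyp hν]; contrapose! hx; linarith)
      (hside x hx hxs)
    rw [hRR] at this
    linarith
  wlog hys : (inner ℝ y ν : ℝ) < lam generalizing y
  · have := this (hodd_refl y hyo) (by rw [inner_reflHyp hν]; contrapose! hy; linarith)
      (hside y hy hys)
    rw [hRR] at this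
    linarith
  exact gagliardoDefect_reflSum_nonneg_of_mem hν hκ hw hxo hyo hxs hys

lemma integral_gagliardoDefect_nonneg (hν : ‖ν‖ = 1) {κ : ℝ} (hκ : 0 ≤ κ) {φ w : Euc N → ℝ}
    (hodd : ∀ᵐ x, φ (reflHyp N ν lam x) = -φ x)
    (hw : ∀ x, w x = if (inner ℝ x ν : ℝ) < lam then max (φ x) 0 else 0)
    (hD : Integrable fun p : Euc N × Euc N => gagliardoDefect κ φ w p.1 p.2) :
    0 ≤ ∫ p : Euc N × Euc N, gagliardoDefect κ φ w p.1 p.2 := by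
  have hR := measurePreserving_reflHyp (lam := lam) hν
  have hRe := measurableEmbedding_reflHyp (lam := lam) hν
  have hR₁ : MeasurePreserving (Prod.map (reflHyp N ν lam) id) (volume : Measure (Euc N × Euc N))
      volume := hR.prod (.id volume)
  have hR₁e : MeasurableEmbedding (Prod.map (reflHyp N ν lam) (id : Euc N → Euc N)) :=
    hRe.prodMap .id
  refine integral_nonneg_of_integral_add_comp_nonneg hR₁ hR₁e hD ?_
  refine integral_nonneg_of_integral_add_comp_nonneg ((MeasurePreserving.id volume).prod hR)
    (MeasurableEmbedding.id.prodMap hRe) (hD.add ((hR₁.integrable_comp_emb hR₁e).2 hD)) ?_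
  refine integral_nonneg_of_ae ?_
  have hgood := hodd.and (ae_inner_ne volume (norm_ne_zero_iff.1 (hν ▸ one_ne_zero)) lam)
  filter_upwards [Measure.quasiMeasurePreserving_fst.ae hgood,
    Measure.quasiMeasurePreserving_snd.ae hgood] with p hp₁ hp₂
  exact gagliardoDefect_reflSum_nonneg hν hκ hw hp₁.1 hp₂.1 hp₁.2 hp₂.2

end Reflection

theorem stmt14_general (N : ℕ) (s : ℝ) (hs0 : 0 < s)
    (ν : Euc N) (hν : ‖ν‖ = 1) (lam : ℝ)
    (u v w : Euc N → ℝ)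
    (hodd : ∀ᵐ x : Euc N, u (reflHyp N ν lam x) - v (reflHyp N ν lam x) = -(u x - v x))
    (hw : ∀ x : Euc N, w x = if (inner ℝ x ν : ℝ) < lam then max (u x - v x) 0 else 0)
    (h1 : Integrable (fun p : Euc N × Euc N =>
      ((u p.1 - v p.1) - (u p.2 - v p.2)) * (w p.1 - w p.2) / ‖p.1 - p.2‖ ^ ((N : ℝ) + 2 * s)))
    (h2 : Integrable (fun p : Euc N × Euc N =>
      (w p.1 - w p.2) ^ 2 / ‖p.1 - p.2‖ ^ ((N : ℝ) + 2 * s))) :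
    (∫ p : Euc N × Euc N, (w p.1 - w p.2) ^ 2 / ‖p.1 - p.2‖ ^ ((N : ℝ) + 2 * s)) ≤
      ∫ p : Euc N × Euc N,
        ((u p.1 - v p.1) - (u p.2 - v p.2)) * (w p.1 - w p.2) / ‖p.1 - p.2‖ ^ ((N : ℝ) + 2 * s) := by
  have hκ : 0 ≤ (N : ℝ) + 2 * s := by positivity
  have hD : Integrable fun p : Euc N × Euc N =>
      gagliardoDefect ((N : ℝ) + 2 * s) (u - v) w p.1 p.2 :=
    (h1.sub h2).congr (.of_forall fun _ => div_sub_div_same _ _ _)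
  rw [← sub_nonneg, ← integral_sub h1 h2]
  exact (integral_gagliardoDefect_nonneg hν hκ hodd hw hD).trans_eq
    (integral_congr_ae (.of_forall fun _ => (div_sub_div_same _ _ _).symm))

/-- the key decomposition inequality in the weak comparison
principle: with `w = (u-v)⁺ 𝟙_Σ` and `u - v` odd with respect to the hyperplane,
the Gagliardo form of `u - v` against `w` dominates the Gagliardo seminorm of `w`. -/
theorem stmt14 (N : ℕ) (s : ℝ) (hs0 : 0 < s) (hs1 : s < 1) (hN : 2 * s < N)
    (ν : Euc N) (hν : ‖ν‖ = 1) (lam : ℝ)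
    (u v w : Euc N → ℝ) (hu : Measurable u) (hv : Measurable v)
    (hodd : ∀ᵐ x : Euc N, u (reflHyp N ν lam x) - v (reflHyp N ν lam x) = -(u x - v x))
    (hw : ∀ x : Euc N, w x = if (inner ℝ x ν : ℝ) < lam then max (u x - v x) 0 else 0)
    (h1 : Integrable (fun p : Euc N × Euc N =>
      ((u p.1 - v p.1) - (u p.2 - v p.2)) * (w p.1 - w p.2) / ‖p.1 - p.2‖ ^ ((N : ℝ) + 2 * s)))
    (h2 : Integrable (fun p : Euc N × Euc N =>
      (w p.1 - w p.2) ^ 2 / ‖p.1 - p.2‖ ^ ((N : ℝ) + 2 * s))) :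
    (∫ p : Euc N × Euc N, (w p.1 - w p.2) ^ 2 / ‖p.1 - p.2‖ ^ ((N : ℝ) + 2 * s)) ≤
      ∫ p : Euc N × Euc N,
        ((u p.1 - v p.1) - (u p.2 - v p.2)) * (w p.1 - w p.2) / ‖p.1 - p.2‖ ^ ((N : ℝ) + 2 * s) :=
  stmt14_general N s hs0 ν hν lam u v w hodd hw h1 h2
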